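/- arXiv:2601.17945 — 2 statements merged into one kernel-verified Lean document; each statement's English description precedes it below -/
import Mathlib

section
/- Every word w (a finite sequence of distinct positive integers) admits a decomposition w = γ*α₁*⋯*α_k as a concatenation where γ is an increasing word (possibly empty) and each α_i is a hook, and this decomposition is unique. -/
/-!
Read the word from the left. If `v = γ α₁ ⋯ α_k`, then `a v` factors either as `(a γ) α₁ ⋯ α_k`
when `γ` is empty or starts above `a`, or as `∅ (a γ) α₁ ⋯ α_k` when `γ` starts below `a`, since
`a γ` is then a hook. The two cases are exclusive, which gives uniqueness by induction, and
distinctness of the letters makes them exhaustive, which gives existence.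
-/

namespace Paper

/-- number of descents of a word -/
def des : List ℕ → ℕ
  | a :: b :: t => (if b < a then 1 else 0) + des (b :: t)
  | _ => 0

/-- number of inversions of a word -/
def inv : List ℕ → ℕ
  | [] => 0
  | a :: t => (t.countP fun x => decide (x < a)) + inv t

/-- a word is (strictly) increasing -/
def Incr (w : List ℕ) : Prop := w.Chain' (· < ·)

/-- a word is a hook: `a₁ > a₂` and `a₂ < a₃ < ⋯ < a_s`, length ≥ 2 -/
def IsHook : List ℕ → Prop
  | a :: b :: t => b < a ∧ (b :: t).Chain' (· < ·)
  | _ => False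

/-- `(γ, hs)` is the hook factorization data of `w` -/
def IsHookFact (w γ : List ℕ) (hs : List (List ℕ)) : Prop :=
  Incr γ ∧ (∀ h ∈ hs, IsHook h) ∧ w = γ ++ hs.flatten

/-- the statistic `lec` computed from the hooks of a factorization -/
def lecVal (hs : List (List ℕ)) : ℕ := (hs.map inv).sum

/-- one-line word of `σ ∈ S_n`, with entries in `[1..n]` -/
def word {n : ℕ} (σ : Equiv.Perm (Fin n)) : List ℕ :=
  List.ofFn fun i => (σ i : ℕ) + 1

/-- a word `w₁ ⋯ w_ℓ` with maximum in position `c` is a (nontrivial) reverse wave if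
`c ≠ ℓ` and `w₁ < ⋯ < w_{c-1} < w_ℓ < w_{ℓ-1} < ⋯ < w_c`. -/
def IsRevWave (w : List ℕ) : Prop :=
  ∃ c, c + 1 < w.length ∧ (w.take c ++ (w.drop c).reverse).Chain' (· < ·)

/-- a word `w₁ ⋯ w_ℓ` with maximum in position `c` is a (nontrivial) wave if
`c ≠ ℓ` and `w_ℓ < w_{ℓ-1} < ⋯ < w_{c+1} < w₁ < ⋯ < w_c`. -/
def IsWave (w : List ℕ) : Prop :=
  ∃ c, c + 1 < w.length ∧ ((w.drop (c + 1)).reverse ++ w.take (c + 1)).Chain' (· < ·)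

/-- the maximal strictly decreasing run starting below `hi` and staying above `lo` -/
def decRun (hi lo : ℕ) : List ℕ → List ℕ
  | [] => []
  | b :: t => if b < hi ∧ lo < b then b :: decRun b lo t else []

def srwAux (lo : ℕ) : List ℕ → List ℕ
  | [] => []
  | [a] => [a]
  | a :: b :: t => if a < b then a :: srwAux a (b :: t) else a :: decRun a lo (b :: t)

/-- the special reverse wave of a word: the prefix `w₁ ⋯ w_s` where `t` is the position of the
first descent (the whole word if none) and `s ≥ t` is maximal with
`w_t > w_{t+1} > ⋯ > w_s > w_{t-1}` (convention `w₀ = 0`). -/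
def srw (w : List ℕ) : List ℕ := srwAux 0 w

/-- the number of special reverse descents: `des (srw w) + χ(w_s > w_{s+1})` -/
def srdes (w : List ℕ) : ℕ :=
  des (srw w) +
    match (srw w).getLast?, (w.drop (srw w).length).head? with
    | some x, some y => if y < x then 1 else 0
    | _, _ => 0

/-- the prefix `w₁ ⋯ w_t` of `w` ending at the position `t` of the first descent
(the whole word if there is no descent) -/
def incrPrefix : List ℕ → List ℕ
  | [] => []
  | [a] => [a]
  | a :: b :: t => if a < b then a :: incrPrefix (b :: t) else [a]

/-- the special wave `w_r ⋯ w_t ⋯ w_s` of a word -/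
def sw (w : List ℕ) : List ℕ :=
  let pre := incrPrefix w
  match w.drop pre.length with
  | [] => w
  | x :: rs =>
    let kept := pre.takeWhile fun u => decide (u < x)
    pre.drop kept.length ++ x :: decRun x (kept.getLastD 0) rs

/-- the word `w \ sw(w) = w₁ ⋯ w_{r-1} w_{s+1} ⋯ w_ℓ` obtained removing the special wave -/
def swCompl (w : List ℕ) : List ℕ :=
  let pre := incrPrefix w
  match w.drop pre.length with
  | [] => []
  | x :: rs =>
    let kept := pre.takeWhile fun u => decide (u < x)
    kept ++ rs.drop (decRun x (kept.getLastD 0) rs).length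

/-- insertion `ins(a,b) = a₁ ⋯ a_x b₁ ⋯ b_q a_{x+1} ⋯ a_p`, where `x` is maximal with
`a₁ < a₂ < ⋯ < a_x < b_q` -/
def ins (a b : List ℕ) : List ℕ :=
  let pfx := (incrPrefix a).takeWhile fun u => decide (u < b.getLastD 0)
  pfx ++ b ++ a.drop pfx.length

/-- the word `ρ = ρ₁ ⋯ ρ_m` (entries in `[1..n]`) associated to an injection `Fin m ↪ Fin n` -/
def rho {n m : ℕ} (f : Fin m ↪ Fin n) : List ℕ :=
  List.ofFn fun j => (f j : ℕ) + 1

/-- descent number of the pair `(α₀, ρ)`: `des ρ + #{a ∈ α₀ : a > ρ₁}`,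
where `α₀ = [n] \ {ρ₁, …, ρ_m}` -/
def desPair (n : ℕ) {m : ℕ} (f : Fin m ↪ Fin n) : ℕ :=
  des (rho f) + ((Finset.Icc 1 n).filter fun a => a ∉ rho f ∧ (rho f).headI < a).card

/-- descent number of the pair `(α₀, ρ)`, with `ρ` given as a list -/
def desPairL (n : ℕ) (ρ : List ℕ) : ℕ :=
  des ρ + ((Finset.Icc 1 n).filter fun a => a ∉ ρ ∧ ρ.headI < a).card

/-- the map `μ`, sending `ρ` (with complementary set `α₀ = {α₁ < ⋯ < α_{n-k-1}}`) to
`α₁ ⋯ α_{n-k-m-1} α_{n-k-1} α_{n-k-2} ⋯ α_{n-k-m} ρ₁ ⋯ ρ_{k+1}`,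
where `m = #{a ∈ α₀ : a > ρ₁}` -/
def mu (n : ℕ) (ρ : List ℕ) : List ℕ :=
  let A := ((Finset.Icc 1 n).filter fun a => a ∉ ρ).sort (· ≤ ·)
  let m := (A.filter fun a => decide (ρ.headI < a)).length
  (A.take (A.length - m) ++ (A.drop (A.length - m)).reverse) ++ ρ


lemma incr_cons_iff {a : ℕ} {l : List ℕ} : Incr (a :: l) ↔ (∀ b ∈ l.head?, a < b) ∧ Incr l :=
  List.isChain_cons

lemma isHook_cons_iff {a : ℕ} {l : List ℕ} : IsHook (a :: l) ↔ (∃ b ∈ l.head?, b < a) ∧ Incr l := by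
  cases l with
  | nil => simp [IsHook, Incr]
  | cons b t => simp [IsHook, Incr]

lemma isHookFact_nil_iff {γ : List ℕ} {hs : List (List ℕ)} :
    IsHookFact [] γ hs ↔ γ = [] ∧ hs = [] := by
  constructor
  · rintro ⟨-, hhook, hw⟩
    obtain ⟨rfl, hflat⟩ := List.append_eq_nil_iff.mp hw.symm
    refine ⟨rfl, List.eq_nil_iff_forall_not_mem.mpr fun h hh => ?_⟩
    have hne : h ≠ [] := by rintro rfl; exact hhook [] hh
    exact hne (List.flatten_eq_nil_iff.mp hflat h hh)
  · rintro ⟨rfl, rfl⟩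
    exact ⟨List.isChain_nil, by simp, rfl⟩

lemma isHookFact_cons_iff {a : ℕ} {v γ : List ℕ} {hs : List (List ℕ)} :
    IsHookFact (a :: v) γ hs ↔
      (∃ γ', γ = a :: γ' ∧ (∀ b ∈ γ'.head?, a < b) ∧ IsHookFact v γ' hs) ∨
      (∃ h hs', γ = [] ∧ hs = (a :: h) :: hs' ∧ (∃ b ∈ h.head?, b < a) ∧ IsHookFact v h hs') := by
  constructor
  · rintro ⟨hγ, hhook, hw⟩
    cases γ with
    | cons c γ' =>
      obtain ⟨rfl, rfl⟩ := List.cons_eq_cons.mp hw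
      obtain ⟨hhead, hγ'⟩ := incr_cons_iff.mp hγ
      exact Or.inl ⟨γ', rfl, hhead, hγ', hhook, rfl⟩
    | nil =>
      cases hs with
      | nil => simp at hw
      | cons h₀ hs' =>
        cases h₀ with
        | nil => exact (hhook [] List.mem_cons_self).elim
        | cons c h =>
          obtain ⟨rfl, rfl⟩ := List.cons_eq_cons.mp hw
          obtain ⟨hhead, hh⟩ := isHook_cons_iff.mp (hhook (a :: h) List.mem_cons_self)
          exact Or.inr ⟨h, hs', rfl, rfl, hhead, hh,
            fun h' hh' => hhook h' (by simp [hh']), by simp⟩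
  · rintro (⟨γ', rfl, hhead, hγ', hhook, rfl⟩ | ⟨h, hs', rfl, rfl, hhead, hh, hhook, rfl⟩)
    · exact ⟨incr_cons_iff.mpr ⟨hhead, hγ'⟩, hhook, rfl⟩
    · refine ⟨List.isChain_nil, ?_, by simp⟩
      intro h' hh'
      rcases List.mem_cons.mp hh' with rfl | hh'
      · exact isHook_cons_iff.mpr ⟨hhead, hh⟩
      · exact hhook h' hh'

lemma IsHookFact.unique {w γ₁ γ₂ : List ℕ} {hs₁ hs₂ : List (List ℕ)}
    (h₁ : IsHookFact w γ₁ hs₁) (h₂ : IsHookFact w γ₂ hs₂) : γ₁ = γ₂ ∧ hs₁ = hs₂ := by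
  induction w generalizing γ₁ γ₂ hs₁ hs₂ with
  | nil =>
    obtain ⟨rfl, rfl⟩ := isHookFact_nil_iff.mp h₁
    obtain ⟨rfl, rfl⟩ := isHookFact_nil_iff.mp h₂
    exact ⟨rfl, rfl⟩
  | cons a v ih =>
    rcases isHookFact_cons_iff.mp h₁ with
      ⟨γ₁', rfl, hlt₁, hf₁⟩ | ⟨k₁, hs₁', rfl, rfl, ⟨b₁, hb₁, hgt₁⟩, hf₁⟩ <;>
    rcases isHookFact_cons_iff.mp h₂ with
      ⟨γ₂', rfl, hlt₂, hf₂⟩ | ⟨k₂, hs₂', rfl, rfl, ⟨b₂, hb₂, hgt₂⟩, hf₂⟩ <;>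
    obtain ⟨rfl, rfl⟩ := ih hf₁ hf₂
    · exact ⟨rfl, rfl⟩
    · exact absurd (hlt₁ b₂ hb₂) (by omega)
    · exact absurd (hlt₂ b₁ hb₁) (by omega)
    · exact ⟨rfl, rfl⟩

lemma exists_isHookFact {w : List ℕ} (hnd : w.Nodup) : ∃ γ hs, IsHookFact w γ hs := by
  induction w with
  | nil => exact ⟨[], [], isHookFact_nil_iff.mpr ⟨rfl, rfl⟩⟩
  | cons a v ih =>
    obtain ⟨hav, hnd⟩ := List.nodup_cons.mp hnd
    obtain ⟨γ, hs, hf⟩ := ih hnd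
    by_cases hlt : ∀ b ∈ γ.head?, a < b
    · exact ⟨a :: γ, hs, isHookFact_cons_iff.mpr (Or.inl ⟨γ, rfl, hlt, hf⟩)⟩
    · obtain ⟨b, hb, hba⟩ := not_forall₂.mp hlt
      have hne : b ≠ a := by
        rintro rfl
        exact hav (hf.2.2 ▸ List.mem_append_left _ (List.mem_of_mem_head? hb))
      exact ⟨[], (a :: γ) :: hs, isHookFact_cons_iff.mpr
        (Or.inr ⟨γ, hs, rfl, rfl, ⟨b, hb, by omega⟩, hf⟩)⟩

end Paper
theorem Paper.statement1_general (w : List ℕ) (hnd : w.Nodup) :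
    ∃! p : List ℕ × List (List ℕ),
      Incr p.1 ∧ (∀ h ∈ p.2, IsHook h) ∧ w = p.1 ++ p.2.flatten := by
  obtain ⟨γ, hs, hf⟩ := Paper.exists_isHookFact hnd
  refine ⟨(γ, hs), hf, fun p hp => ?_⟩
  obtain ⟨h₁, h₂⟩ := Paper.IsHookFact.unique hp hf
  exact Prod.ext h₁ h₂

/-- every word (finite sequence of distinct positive integers) admits a unique
decomposition `w = γ * α₁ * ⋯ * α_k` where `γ` is increasing (possibly empty) and each `α_i`
is a hook. -/
theorem Paper.statement1 (w : List ℕ) (hnd : w.Nodup) (hpos : ∀ x ∈ w, 0 < x) :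
    ∃! p : List ℕ × List (List ℕ),
      Incr p.1 ∧ (∀ h ∈ p.2, IsHook h) ∧ w = p.1 ++ p.2.flatten :=
  Paper.statement1_general w hnd
end

section
/- For every non-empty word w, the special reverse wave srw(w) is a reverse wave (possibly trivial), and it is the maximal prefix of w that is a reverse wave (possibly trivial): every prefix of w that is a (possibly trivial) reverse wave is a prefix of srw(w). -/
/-!
A word `x :: u` is a possibly trivial reverse wave exactly when it is decreasing, or `x` is
below every letter of `u` and `u` is again a possibly trivial reverse wave. So up to the first
descent `w_t > w_{t+1}`, both `srw w` and every reverse wave prefix of `w` peel off one letter at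
a time, and what such a prefix has left from `w_t` on is decreasing and bounded below by
`w_{t-1}`: it lies inside the longest such run, which is exactly what `srw` keeps.
-/

namespace Paper

def IsRevWaveOrIncr (w : List ℕ) : Prop :=
  ∃ c, (w.take c ++ (w.drop c).reverse).IsChain (· < ·)

theorem isRevWaveOrIncr_iff {w : List ℕ} : IsRevWaveOrIncr w ↔ IsRevWave w ∨ Incr w := by
  constructor
  · rintro ⟨c, h⟩
    by_cases hc : c + 1 < w.length
    · exact Or.inl ⟨c, hc, h⟩
    · have hdrop : (w.drop c).reverse = w.drop c := by
        match hd : w.drop c with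
        | [] | [_] => rfl
        | _ :: _ :: _ => have := congrArg List.length hd; simp at this; omega
      rw [hdrop, List.take_append_drop] at h
      exact Or.inr h
  · rintro (⟨c, -, h⟩ | h)
    · exact ⟨c, h⟩
    · refine ⟨w.length, ?_⟩
      rw [List.take_length, List.drop_length, List.reverse_nil, List.append_nil]
      exact h

theorem take_append_reverse_drop_perm {α : Type*} (l : List α) (c : ℕ) :
    (l.take c ++ (l.drop c).reverse).Perm l := by
  calc (l.take c ++ (l.drop c).reverse).Perm (l.take c ++ l.drop c) :=
        (List.reverse_perm _).append_left _
    _ = l := List.take_append_drop c l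

theorem isRevWaveOrIncr_cons_iff {x : ℕ} {u : List ℕ} :
    IsRevWaveOrIncr (x :: u) ↔
      (x :: u).IsChain (· > ·) ∨ ((∀ z ∈ u, x < z) ∧ IsRevWaveOrIncr u) := by
  constructor
  · rintro ⟨_ | c, h⟩
    · rw [List.take_zero, List.drop_zero, List.nil_append] at h
      exact Or.inl (List.isChain_reverse.mp h)
    · rw [List.take_succ_cons, List.drop_succ_cons, List.cons_append, List.isChain_iff_pairwise,
        List.pairwise_cons, ← List.isChain_iff_pairwise] at h
      exact Or.inr ⟨fun z hz => h.1 z ((take_append_reverse_drop_perm u c).mem_iff.mpr hz), c, h.2⟩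
  · rintro (h | ⟨hlt, c, h⟩)
    · exact ⟨0, List.isChain_reverse.mpr h⟩
    · refine ⟨c + 1, ?_⟩
      rw [List.take_succ_cons, List.drop_succ_cons, List.cons_append, List.isChain_iff_pairwise,
        List.pairwise_cons, ← List.isChain_iff_pairwise]
      exact ⟨fun z hz => hlt z ((take_append_reverse_drop_perm u c).mem_iff.mp hz), h⟩

theorem decRun_prefix (hi lo : ℕ) (l : List ℕ) : decRun hi lo l <+: l := by
  fun_induction decRun hi lo l with
  | case1 => exact List.nil_prefix
  | case2 _ b _ _ ih => exact (List.prefix_cons_inj b).mpr ih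
  | case3 => exact List.nil_prefix

theorem lt_of_mem_decRun {hi lo x : ℕ} {l : List ℕ} (hx : x ∈ decRun hi lo l) : lo < x := by
  fun_induction decRun hi lo l with
  | case1 => simp at hx
  | case2 _ _ _ h ih => exact (List.mem_cons.mp hx).elim (· ▸ h.2) ih
  | case3 => simp at hx

theorem isChain_gt_cons_decRun (hi lo : ℕ) (l : List ℕ) :
    (hi :: decRun hi lo l).IsChain (· > ·) := by
  fun_induction decRun hi lo l with
  | case1 => simp
  | case2 _ _ _ h ih => exact List.isChain_cons_cons.mpr ⟨h.1, ih⟩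
  | case3 => simp

theorem prefix_decRun_of_isChain {hi lo : ℕ} {v l : List ℕ} (hdec : (hi :: v).IsChain (· > ·))
    (hlo : ∀ x ∈ v, lo < x) (hv : v <+: l) : v <+: decRun hi lo l := by
  induction l generalizing hi v with
  | nil => simp_all
  | cons b t ih =>
    rcases v with _ | ⟨x, v⟩
    · exact List.nil_prefix
    obtain ⟨rfl, hvt⟩ := List.cons_prefix_cons.mp hv
    obtain ⟨hxhi, hvdec⟩ := List.isChain_cons_cons.mp hdec
    rw [decRun, if_pos ⟨hxhi, hlo x List.mem_cons_self⟩]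
    exact (List.prefix_cons_inj x).mpr
      (ih hvdec (fun y hy => hlo y (List.mem_cons_of_mem _ hy)) hvt)

theorem srwAux_prefix (lo : ℕ) (w : List ℕ) : srwAux lo w <+: w := by
  fun_induction srwAux lo w with
  | case1 | case2 => exact List.prefix_rfl
  | case3 _ a _ _ _ ih => exact (List.prefix_cons_inj a).mpr ih
  | case4 _ a _ _ _ => exact (List.prefix_cons_inj a).mpr (decRun_prefix _ _ _)

theorem lt_of_mem_srwAux {lo x : ℕ} {w : List ℕ} (hlo : ∀ y ∈ w.head?, lo < y)
    (hx : x ∈ srwAux lo w) : lo < x := by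
  fun_induction srwAux lo w with
  | case1 => simp at hx
  | case2 => simp_all
  | case3 lo a _ _ hab ih =>
    have hloa : lo < a := hlo a rfl
    exact (List.mem_cons.mp hx).elim (· ▸ hloa) fun hx => hloa.trans (ih (by simpa using hab) hx)
  | case4 _ a _ _ _ =>
    exact (List.mem_cons.mp hx).elim (· ▸ hlo a rfl) lt_of_mem_decRun

theorem isRevWaveOrIncr_srwAux (lo : ℕ) (w : List ℕ) : IsRevWaveOrIncr (srwAux lo w) := by
  fun_induction srwAux lo w with
  | case1 | case2 => exact ⟨0, by simp⟩
  | case3 _ _ _ _ hab ih =>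
    exact isRevWaveOrIncr_cons_iff.mpr
      (.inr ⟨fun z hz => lt_of_mem_srwAux (by simpa using hab) hz, ih⟩)
  | case4 => exact isRevWaveOrIncr_cons_iff.mpr (.inl (isChain_gt_cons_decRun _ _ _))

theorem prefix_srwAux {lo : ℕ} {w u : List ℕ} (hu : u <+: w) (hwave : IsRevWaveOrIncr u)
    (hlo : ∀ x ∈ u, lo < x) : u <+: srwAux lo w := by
  induction w generalizing lo u with
  | nil => simp_all
  | cons a l ih =>
    rcases u with _ | ⟨x, u⟩
    · exact List.nil_prefix
    obtain ⟨rfl, hul⟩ := List.cons_prefix_cons.mp hu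
    rcases l with _ | ⟨b, t⟩
    · simp_all [srwAux]
    rcases u with _ | ⟨y, v⟩
    · rw [srwAux]; split <;> simp
    obtain rfl : y = b := (List.cons_prefix_cons.mp hul).1
    rw [isRevWaveOrIncr_cons_iff] at hwave
    by_cases hxy : x < y
    · rw [srwAux, if_pos hxy]
      rcases hwave with hdec | ⟨hgt, hwave⟩
      · exact absurd (List.isChain_cons_cons.mp hdec).1 (lt_asymm hxy)
      · exact (List.prefix_cons_inj x).mpr (ih hul hwave hgt)
    · rw [srwAux, if_neg hxy]
      rcases hwave with hdec | ⟨hgt, -⟩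
      · exact (List.prefix_cons_inj x).mpr
          (prefix_decRun_of_isChain hdec (fun z hz => hlo z (List.mem_cons_of_mem _ hz)) hul)
      · exact absurd (hgt y List.mem_cons_self) hxy

end Paper

theorem Paper.statement5_general (w : List ℕ)
    (hpos : ∀ x ∈ w, 0 < x) :
    (IsRevWave (srw w) ∨ Incr (srw w)) ∧ srw w <+: w ∧
      ∀ u : List ℕ, u <+: w → (IsRevWave u ∨ Incr u) → u <+: srw w := by
  simp only [← isRevWaveOrIncr_iff]
  exact ⟨isRevWaveOrIncr_srwAux 0 w, srwAux_prefix 0 w,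
    fun u hu hwave => prefix_srwAux hu hwave fun x hx => hpos x (hu.subset hx)⟩

/-- for every non-empty word `w`, the special reverse wave `srw w` is a
(possibly trivial) reverse wave, and it is the maximal prefix of `w` that is a
(possibly trivial) reverse wave. -/
theorem Paper.statement5 (w : List ℕ) (hw : w ≠ []) (hnd : w.Nodup)
    (hpos : ∀ x ∈ w, 0 < x) :
    (IsRevWave (srw w) ∨ Incr (srw w)) ∧ srw w <+: w ∧
      ∀ u : List ℕ, u <+: w → (IsRevWave u ∨ Incr u) → u <+: srw w :=
  Paper.statement5_general w hpos
end
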